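/- Cross-arm covariance identity in the Hajek linearization (key computation of Lemma 3): Writing μ̄¹ = (1/N) Σ_{i=1}^N E[μ_i^{(1)}(Z)] and μ̄⁰ = (1/N) Σ_{i=1}^N E[μ_i^{(0)}(Z)], the following exact identity holds under the Bernoulli design alone: N · Cov[(1/(Np)) Σ_{i=1}^N Z_i (μ_i(Z) − μ̄¹), (1/(N(1−p))) Σ_{j=1}^N (1−Z_j)(μ_j(Z) − μ̄⁰)] = (1/N) Σ_{i=1}^N Σ_{j≠i} E[(μ_i(Z[i:=1][j:=0]) − μ̄¹)(μ_j(Z[i:=1][j:=0]) − μ̄⁰)] − (1/N) Σ_{i=1}^N Σ_{j=1}^N (E[μ_i^{(1)}(Z)] − μ̄¹)(E[μ_j^{(0)}(Z)] − μ̄⁰). -/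

import Mathlib

/-!
Under the Bernoulli design the coordinates are independent, so weighting by `Z_i` (resp.
`1 - Z_j`) and averaging amounts to setting `z_i := 1` (resp. `z_j := 0`) at the cost of a
factor `p` (resp. `1 - p`). The inverse-probability weights cancel these factors: each arm's
estimator has mean `(1/N) Σ_i (E[μ_i^{(a)}] - μ̄^a)`, and in the mean of the product the diagonal
`i = j` vanishes because `Z_i (1 - Z_i) = 0`, while each off-diagonal term becomes the mean at
`z[i:=1][j:=0]`.
-/

/-- Expectation with respect to the Bernoulli(p) product measure on `{0,1}^N`. -/
noncomputable def bexp {N : ℕ} (p : ℝ) (f : (Fin N → Bool) → ℝ) : ℝ :=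
  ∑ z : Fin N → Bool, (∏ i, if z i then p else 1 - p) * f z

/-- Covariance under the Bernoulli(p) product measure. -/
noncomputable def bcov {N : ℕ} (p : ℝ) (f g : (Fin N → Bool) → ℝ) : ℝ :=
  bexp p (fun z => f z * g z) - bexp p f * bexp p g

open Finset Function

section bexp

variable {N : ℕ} {p : ℝ}

theorem bexp_sum {ι : Type*} (s : Finset ι) (f : ι → (Fin N → Bool) → ℝ) :
    bexp p (fun z => ∑ i ∈ s, f i z) = ∑ i ∈ s, bexp p (f i) := by
  simp only [bexp, mul_sum]
  exact sum_comm

theorem bexp_const_mul (c : ℝ) (f : (Fin N → Bool) → ℝ) :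
    bexp p (fun z => c * f z) = c * bexp p f := by
  simp only [bexp, mul_sum, mul_left_comm]

@[simp]
theorem bexp_zero : bexp p (fun _ : Fin N → Bool => 0) = 0 := by
  simp [bexp]

theorem bexp_const (c : ℝ) : bexp p (fun _ : Fin N → Bool => c) = c := by
  rw [bexp, ← sum_mul, ← Fintype.prod_sum (fun _ (b : Bool) => if b then p else 1 - p)]
  simp

theorem bexp_sub_const (f : (Fin N → Bool) → ℝ) (c : ℝ) :
    bexp p (fun z => f z - c) = bexp p f - c := by
  conv_rhs => rw [← bexp_const (p := p) (N := N) c]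
  simp only [bexp, mul_sub, sum_sub_distrib]

theorem bexp_eq_sum_insertNth {n : ℕ} (i : Fin (n + 1)) (f : (Fin (n + 1) → Bool) → ℝ) :
    bexp p f = ∑ b : Bool, (if b then p else 1 - p) *
      bexp p (fun g : Fin n → Bool => f (i.insertNth b g)) := by
  rw [bexp, ← (Fin.insertNthEquiv (fun _ => Bool) i).sum_comp, Fintype.sum_prod_type]
  simp only [bexp, mul_sum, Fin.prod_univ_succAbove _ i, mul_assoc, Fin.insertNthEquiv,
    Equiv.coe_fn_mk, Fin.insertNth_apply_same, Fin.insertNth_apply_succAbove]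

theorem bexp_ite_eq_mul (i : Fin N) (a : Bool) (f : (Fin N → Bool) → ℝ) :
    bexp p (fun z => (if z i = a then 1 else 0) * f z)
      = (if a then p else 1 - p) * bexp p (fun z => f (update z i a)) := by
  cases N with
  | zero => exact i.elim0
  | succ n =>
    rw [bexp_eq_sum_insertNth i, bexp_eq_sum_insertNth i]
    -- only `b = a` survives on the left; on the right the weights of `b` sum to one
    cases a <;>
      simp only [Fintype.sum_bool, Fin.insertNth_apply_same, Fin.update_insertNth, ↓reduceIte,
        Bool.true_eq_false, Bool.false_eq_true, one_mul, zero_mul, bexp_zero, mul_zero] <;>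
      ring

theorem bexp_ite_mul (i : Fin N) (f : (Fin N → Bool) → ℝ) :
    bexp p (fun z => (if z i then 1 else 0) * f z) = p * bexp p (fun z => f (update z i true)) :=
  bexp_ite_eq_mul i true f

theorem bexp_one_sub_ite_mul (i : Fin N) (f : (Fin N → Bool) → ℝ) :
    bexp p (fun z => (1 - if z i then 1 else 0) * f z)
      = (1 - p) * bexp p (fun z => f (update z i false)) := by
  have h : ∀ z : Fin N → Bool,
      (1 - if z i then (1 : ℝ) else 0) = if z i = false then 1 else 0 := by
    intro z
    cases z i <;> simp
  simp only [h]
  exact bexp_ite_eq_mul i false f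

theorem bexp_ite_mul_one_sub_ite_mul {i j : Fin N} (hij : j ≠ i) (f g : (Fin N → Bool) → ℝ) :
    bexp p (fun z => ((if z i then 1 else 0) * f z) * ((1 - if z j then 1 else 0) * g z))
      = p * (1 - p) * bexp p (fun z =>
          f (update (update z i true) j false) * g (update (update z i true) j false)) := by
  have h : ∀ z : Fin N → Bool,
      ((if z i then 1 else 0) * f z) * ((1 - if z j then 1 else 0) * g z)
        = (if z i then 1 else 0) * ((1 - if z j then 1 else 0) * (f z * g z)) := by
    intro z
    ring
  simp only [h, bexp_ite_mul i, update_of_ne hij, bexp_one_sub_ite_mul j, update_comm hij]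
  ring

end bexp

section InverseProbabilityWeighting

variable {N : ℕ} {p : ℝ} (μ : Fin N → (Fin N → Bool) → ℝ) (c c' : ℝ)

theorem bexp_ipw_treated (hp : p ≠ 0) :
    bexp p (fun z => (1 / (N * p)) * ∑ i, (if z i then (1 : ℝ) else 0) * (μ i z - c))
      = (1 / N) * ∑ i, (bexp p (fun z => μ i (update z i true)) - c) := by
  simp only [bexp_const_mul, bexp_sum, bexp_ite_mul, bexp_sub_const, ← mul_sum]
  field_simp

theorem bexp_ipw_control (hp : p ≠ 1) :
    bexp p (fun z => (1 / (N * (1 - p))) *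
        ∑ j, (1 - if z j then (1 : ℝ) else 0) * (μ j z - c'))
      = (1 / N) * ∑ j, (bexp p (fun z => μ j (update z j false)) - c') := by
  have hq : 1 - p ≠ 0 := sub_ne_zero.2 hp.symm
  simp only [bexp_const_mul, bexp_sum, bexp_one_sub_ite_mul, bexp_sub_const, ← mul_sum]
  field_simp

theorem bexp_ipw_treated_mul_control (hp0 : p ≠ 0) (hp1 : p ≠ 1) :
    bexp p (fun z =>
        ((1 / (N * p)) * ∑ i, (if z i then (1 : ℝ) else 0) * (μ i z - c))
          * ((1 / (N * (1 - p))) * ∑ j, (1 - if z j then (1 : ℝ) else 0) * (μ j z - c')))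
      = (1 / N) * (1 / N) * ∑ i, ∑ j ∈ univ.erase i,
          bexp p (fun z =>
            (μ i (update (update z i true) j false) - c)
              * (μ j (update (update z i true) j false) - c')) := by
  have hq : 1 - p ≠ 0 := sub_ne_zero.2 hp1.symm
  have diag : ∀ (i : Fin N) (z : Fin N → Bool),
      ((if z i then (1 : ℝ) else 0) * (μ i z - c)) * ((1 - if z i then 1 else 0) * (μ i z - c'))
        = 0 := by
    intro i z
    cases z i <;> simp
  have expand : ∀ z : Fin N → Bool,
      ((1 / (N * p)) * ∑ i, (if z i then (1 : ℝ) else 0) * (μ i z - c))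
        * ((1 / (N * (1 - p))) * ∑ j, (1 - if z j then (1 : ℝ) else 0) * (μ j z - c'))
      = (1 / (N * p)) * (1 / (N * (1 - p))) * ∑ i, ∑ j,
          ((if z i then (1 : ℝ) else 0) * (μ i z - c))
            * ((1 - if z j then (1 : ℝ) else 0) * (μ j z - c')) := fun z => by
    rw [mul_mul_mul_comm, sum_mul_sum]
  have offdiag : ∀ i, ∑ j, bexp p (fun z =>
      ((if z i then (1 : ℝ) else 0) * (μ i z - c))
        * ((1 - if z j then (1 : ℝ) else 0) * (μ j z - c')))
      = p * (1 - p) * ∑ j ∈ univ.erase i, bexp p (fun z =>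
          (μ i (update (update z i true) j false) - c)
            * (μ j (update (update z i true) j false) - c')) := by
    intro i
    rw [← add_sum_erase _ _ (mem_univ i), mul_sum]
    simp only [diag, bexp_zero, zero_add]
    exact sum_congr rfl fun j hj => bexp_ite_mul_one_sub_ite_mul (ne_of_mem_erase hj) _ _
  simp only [expand, bexp_const_mul, bexp_sum, offdiag]
  rw [← mul_sum]
  field_simp

end InverseProbabilityWeighting

theorem hajek_cross_arm_covariance_general
    (N : ℕ) (p : ℝ) (hp0 : 0 < p) (hp1 : p < 1)
    (μ : Fin N → (Fin N → Bool) → ℝ)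
    (mu1 mu0 : ℝ) :
    (N : ℝ) * bcov p
        (fun z => (1 / (N * p)) * ∑ i, (if z i then (1 : ℝ) else 0) * (μ i z - mu1))
        (fun z => (1 / (N * (1 - p))) *
          ∑ j, (1 - if z j then (1 : ℝ) else 0) * (μ j z - mu0))
      = (1 / N) * ∑ i, ∑ j ∈ Finset.univ.erase i,
          bexp p (fun z =>
            (μ i (Function.update (Function.update z i true) j false) - mu1)
              * (μ j (Function.update (Function.update z i true) j false) - mu0))
        - (1 / N) * ∑ i, ∑ j : Fin N,
            (bexp p (fun z => μ i (Function.update z i true)) - mu1)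
              * (bexp p (fun z => μ j (Function.update z j false)) - mu0) := by
  rw [bcov, bexp_ipw_treated_mul_control μ mu1 mu0 hp0.ne' hp1.ne,
    bexp_ipw_treated μ mu1 hp0.ne', bexp_ipw_control μ mu0 hp1.ne, ← sum_mul_sum]
  have hN : (N : ℝ) * (1 / N) * (1 / N) = 1 / N := by
    rw [mul_assoc]
    simpa only [one_div, inv_inv, mul_comm] using mul_self_mul_inv (N : ℝ)⁻¹
  simp only [mul_sub, mul_mul_mul_comm (1 / (N : ℝ)), ← mul_assoc, hN]

/-- Cross-arm covariance identity in the Hajek linearization (key computation of Lemma 3),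
which holds under the Bernoulli design alone. -/
theorem hajek_cross_arm_covariance
    (N : ℕ) (hN : 1 ≤ N) (p : ℝ) (hp0 : 0 < p) (hp1 : p < 1)
    (μ : Fin N → (Fin N → Bool) → ℝ)
    (mu1 mu0 : ℝ)
    (hmu1 : mu1 = (1 / N) * ∑ i, bexp p (fun z => μ i (Function.update z i true)))
    (hmu0 : mu0 = (1 / N) * ∑ i, bexp p (fun z => μ i (Function.update z i false))) :
    (N : ℝ) * bcov p
        (fun z => (1 / (N * p)) * ∑ i, (if z i then (1 : ℝ) else 0) * (μ i z - mu1))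
        (fun z => (1 / (N * (1 - p))) *
          ∑ j, (1 - if z j then (1 : ℝ) else 0) * (μ j z - mu0))
      = (1 / N) * ∑ i, ∑ j ∈ Finset.univ.erase i,
          bexp p (fun z =>
            (μ i (Function.update (Function.update z i true) j false) - mu1)
              * (μ j (Function.update (Function.update z i true) j false) - mu0))
        - (1 / N) * ∑ i, ∑ j : Fin N,
            (bexp p (fun z => μ i (Function.update z i true)) - mu1)
              * (bexp p (fun z => μ j (Function.update z j false)) - mu0) :=
  hajek_cross_arm_covariance_general N p hp0 hp1 μ mu1 mu0
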